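/- arXiv:2502.05973 — 2 statements merged into one kernel-verified Lean document; each statement's English description precedes it below -/
import Mathlib

section
/- Let $Q \subset \mathbb{R}^{d}$ be a cube of side length $L$, and let $\mathbf{B}$ be a finite collection of pairwise disjoint axis-parallel cubes of side length $s \leq L$ contained in $Q$. Let $\mathcal{S}$ denote a fixed family of 'slabs' (arbitrary subsets of $Q$). Then there exists a dyadic number $\rho \geq 1$ and a subcollection $\mathbf{B}' \subseteq \mathbf{B}$ with $|\mathbf{B}'| \geq c (\log(2 + |\mathbf{B}|))^{-1} |\mathbf{B}|$ for an absolute constant $c > 0$, such that: (1) every slab $S \in \mathcal{S}$ intersects at most $2\rho$ cubes of $\mathbf{B}'$; and (2) there exist slabs $S_1, \dots, S_m \in \mathcal{S}$ with $m \leq C |\mathbf{B}'|/\rho$ such that every cube of $\mathbf{B}'$ intersects $S_1 \cup \dots \cup S_m$ — provided that every cube of $\mathbf{B}$ intersects at least one slab of $\mathcal{S}$ and $|\{B \in \mathbf{B} : B \cap S \neq \emptyset\}| \leq |\mathbf{B}|$ for all $S$. -/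
/-!
Greedily peel off, at threshold `t`, all cubes meeting a slab that still meets at least `t` of
them: the peeled cubes are covered by at most `1/t` times as many slabs, and afterwards every
slab meets fewer than `t` of the remaining cubes. If initially every slab meets fewer than
`2^(j+1)` cubes, doing this for `t = 2^j, 2^(j-1), …, 1` splits the cubes into `j + 1` layers,
and the layer of threshold `2^k` is `2^k`-regular because its multiplicities are still below
`2^(k+1)`. The largest layer keeps a `1/(j+1)` fraction, and `j = ⌊log₂ |B|⌋` suffices.
-/

open Finset

namespace CoveringRegularity

variable {α β : Type*} (S : Set β) (R : α → β → Prop) [∀ b T, Decidable (R b T)]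

def IsRegular (ρ : ℕ) (B : Finset α) : Prop :=
  (∀ T ∈ S, (B.filter (R · T)).card ≤ 2 * ρ) ∧
    ∃ 𝒮 : Finset β, ↑𝒮 ⊆ S ∧ ρ * 𝒮.card ≤ B.card ∧ ∀ b ∈ B, ∃ T ∈ 𝒮, R b T

theorem exists_greedy_layer [DecidableEq α] {t : ℕ} (ht : 0 < t) (B : Finset α) :
    ∃ B₁ ⊆ B, ∃ 𝒮 : Finset β, ↑𝒮 ⊆ S ∧ t * 𝒮.card ≤ B₁.card ∧
      (∀ b ∈ B₁, ∃ T ∈ 𝒮, R b T) ∧ ∀ T ∈ S, ((B \ B₁).filter (R · T)).card < t := by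
  classical
  induction B using Finset.strongInduction with
  | _ B ih =>
    by_cases hheavy : ∃ T ∈ S, t ≤ (B.filter (R · T)).card
    · obtain ⟨T₀, hT₀, ht₀⟩ := hheavy
      set D := B.filter (R · T₀)
      have hD : D.Nonempty := card_pos.mp (ht.trans_le ht₀)
      obtain ⟨B₁, hB₁, 𝒮, h𝒮, hcard, hcov, hrest⟩ :=
        ih (B \ D) (sdiff_ssubset (filter_subset _ _) hD)
      have hdisj : Disjoint D B₁ := disjoint_of_subset_right hB₁ disjoint_sdiff
      refine ⟨D ∪ B₁, union_subset (filter_subset _ _) (hB₁.trans sdiff_subset), insert T₀ 𝒮,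
        ?_, ?_, ?_, ?_⟩
      · rw [coe_insert]
        exact Set.insert_subset hT₀ h𝒮
      · calc t * (insert T₀ 𝒮).card ≤ t * (𝒮.card + 1) :=
              Nat.mul_le_mul_left _ (card_insert_le _ _)
          _ = t * 𝒮.card + t := by ring
          _ ≤ B₁.card + D.card := Nat.add_le_add hcard ht₀
          _ = (D ∪ B₁).card := by rw [card_union_of_disjoint hdisj, add_comm]
      · intro b hb
        rcases mem_union.mp hb with hbD | hbB₁
        · exact ⟨T₀, mem_insert_self _ _, (mem_filter.mp hbD).2⟩
        · obtain ⟨T, hT, hbT⟩ := hcov b hbB₁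
          exact ⟨T, mem_insert_of_mem hT, hbT⟩
      · intro T hT
        rw [← sup_eq_union, ← sdiff_sdiff_left]
        exact hrest T hT
    · push Not at hheavy
      exact ⟨∅, empty_subset _, ∅, by simp, by simp, by simp, by simpa using hheavy⟩

theorem eq_empty_of_forall_card_filter_lt_one {B : Finset α}
    (hcov : ∀ b ∈ B, ∃ T ∈ S, R b T) (hcnt : ∀ T ∈ S, (B.filter (R · T)).card < 1) :
    B = ∅ := by
  refine eq_empty_of_forall_notMem fun b hb => ?_
  obtain ⟨T, hT, hbT⟩ := hcov b hb
  have := hcnt T hT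
  rw [Nat.lt_one_iff, card_eq_zero, filter_eq_empty_iff] at this
  exact this hb hbT

theorem exists_regular_layer [DecidableEq α] {t : ℕ} (ht : 0 < t) {B : Finset α}
    (hcnt : ∀ T ∈ S, (B.filter (R · T)).card ≤ 2 * t) :
    ∃ B₁ ⊆ B, IsRegular S R t B₁ ∧ ∀ T ∈ S, ((B \ B₁).filter (R · T)).card < t := by
  obtain ⟨B₁, hB₁, 𝒮, h𝒮, hcard, hcov, hrest⟩ := exists_greedy_layer S R ht B
  refine ⟨B₁, hB₁, ⟨fun T hT => ?_, 𝒮, h𝒮, hcard, hcov⟩, hrest⟩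
  exact (card_le_card (filter_subset_filter _ hB₁)).trans (hcnt T hT)

theorem exists_regular_subset_of_card_filter_lt_two_pow (j : ℕ) {B : Finset α}
    (hcov : ∀ b ∈ B, ∃ T ∈ S, R b T) (hcnt : ∀ T ∈ S, (B.filter (R · T)).card < 2 ^ (j + 1)) :
    ∃ (k : ℕ) (B' : Finset α), B' ⊆ B ∧ B.card ≤ (j + 1) * B'.card ∧
      IsRegular S R (2 ^ k) B' := by
  classical
  induction j generalizing B with
  | zero =>
    obtain ⟨B₁, hB₁, hreg₁, hrest⟩ := exists_regular_layer S R (Nat.two_pow_pos 0)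
      fun T hT => (hcnt T hT).le.trans_eq (pow_succ' 2 0)
    have hB : B \ B₁ = ∅ := eq_empty_of_forall_card_filter_lt_one S R
      (fun b hb => hcov b (mem_sdiff.mp hb).1) hrest
    exact ⟨0, B₁, hB₁, by simpa using card_le_card (sdiff_eq_empty_iff_subset.mp hB), hreg₁⟩
  | succ j ih =>
    obtain ⟨B₁, hB₁, hreg₁, hrest⟩ := exists_regular_layer S R (Nat.two_pow_pos (j + 1))
      fun T hT => (hcnt T hT).le.trans_eq (pow_succ' 2 (j + 1))
    obtain ⟨k, B', hB', hcard', hreg'⟩ :=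
      ih (B := B \ B₁) (fun b hb => hcov b (mem_sdiff.mp hb).1) hrest
    have hsplit : B.card = B₁.card + (B \ B₁).card := by
      rw [add_comm, card_sdiff_add_card_eq_card hB₁]
    rcases le_total B₁.card B'.card with hle | hle
    · refine ⟨k, B', hB'.trans sdiff_subset, ?_, hreg'⟩
      nlinarith
    · refine ⟨j + 1, B₁, hB₁, ?_, hreg₁⟩
      nlinarith

theorem exists_regular_subset {B : Finset α} (hcov : ∀ b ∈ B, ∃ T ∈ S, R b T)
    (hcnt : ∀ T ∈ S, (B.filter (R · T)).card ≤ B.card) :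
    ∃ (k : ℕ) (B' : Finset α), B' ⊆ B ∧ B.card ≤ (Nat.log 2 B.card + 1) * B'.card ∧
      IsRegular S R (2 ^ k) B' :=
  exists_regular_subset_of_card_filter_lt_two_pow S R _ hcov fun T hT =>
    (hcnt T hT).trans_lt (Nat.lt_pow_succ_log_self one_lt_two _)

end CoveringRegularity

theorem Finset.ncard_sep_coe_eq_card_filter {α : Type*} (B : Finset α) (p : α → Prop)
    [DecidablePred p] :
    {b ∈ (B : Set α) | p b}.ncard = (B.filter p).card := by
  rw [← Set.ncard_coe_finset]
  congr 1
  ext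
  simp

theorem Nat.log_two_add_one_le_four_mul_log (n : ℕ) :
    (Nat.log 2 n + 1 : ℝ) ≤ 4 * Real.log (2 + n) := by
  have hpow : 2 ^ (Nat.log 2 n + 1) ≤ (2 + n) ^ 2 := by
    have := Nat.pow_log_le_add_one 2 n
    rw [pow_succ]
    nlinarith
  have hlog : (Nat.log 2 n + 1 : ℝ) * Real.log 2 ≤ 2 * Real.log (2 + n) := by
    have hpow' : (2 : ℝ) ^ (Nat.log 2 n + 1) ≤ (2 + n) ^ 2 := by exact_mod_cast hpow
    have := Real.log_le_log (by positivity) hpow'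
    rwa [Real.log_pow, Real.log_pow, Nat.cast_add_one] at this
  nlinarith [Real.log_two_gt_d9, (Nat.log 2 n).cast_nonneg (α := ℝ)]

/-- Covering/regularity lemma: given pairwise disjoint axis-parallel subcubes of
side `s` of a cube `Q` of side `L`, and a family `S` of slabs in `Q` such that
every cube meets some slab, there is a dyadic `ρ = 2^j ≥ 1` and a
`(log)⁻¹`-fraction subfamily `B'` that is `ρ`-regular for `S`: every slab meets
at most `2ρ` cubes of `B'`, and `B'` is covered by at most `C|B'|/ρ` slabs. -/
theorem covering_regularity_lemma :
    ∃ c : ℝ, 0 < c ∧ ∃ C : ℝ, 0 < C ∧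
    ∀ (d : ℕ) (L s : ℝ) (q : Fin d → ℝ), 0 < s → s ≤ L →
    ∀ B : Finset (Fin d → ℝ),
      (∀ b ∈ B, Set.Icc b (fun i => b i + s) ⊆ Set.Icc q (fun i => q i + L)) →
      ((B : Set (Fin d → ℝ)).Pairwise fun b b' =>
        Disjoint (Set.Icc b (fun i => b i + s)) (Set.Icc b' (fun i => b' i + s))) →
    ∀ S : Set (Set (Fin d → ℝ)),
      (∀ T ∈ S, T ⊆ Set.Icc q (fun i => q i + L)) →
      (∀ b ∈ B, ∃ T ∈ S, (Set.Icc b (fun i => b i + s) ∩ T).Nonempty) →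
      (∀ T ∈ S,
        {b ∈ (B : Set (Fin d → ℝ)) |
          (Set.Icc b (fun i => b i + s) ∩ T).Nonempty}.ncard ≤ B.card) →
      ∃ (j : ℕ) (B' : Finset (Fin d → ℝ)), B' ⊆ B ∧
        c * (Real.log (2 + (B.card : ℝ)))⁻¹ * (B.card : ℝ) ≤ (B'.card : ℝ) ∧
        (∀ T ∈ S,
          ({b ∈ (B' : Set (Fin d → ℝ)) |
            (Set.Icc b (fun i => b i + s) ∩ T).Nonempty}.ncard : ℝ) ≤ 2 * 2 ^ j) ∧
        ∃ 𝒮 : Finset (Set (Fin d → ℝ)), (𝒮 : Set (Set (Fin d → ℝ))) ⊆ S ∧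
          (𝒮.card : ℝ) ≤ C * (B'.card : ℝ) / 2 ^ j ∧
          ∀ b ∈ B', ∃ T ∈ 𝒮, (Set.Icc b (fun i => b i + s) ∩ T).Nonempty := by
  classical
  refine ⟨1 / 4, by norm_num, 1, one_pos, ?_⟩
  intro d L s q _ _ B _ _ S _ hcov hcnt
  have hcnt₁ : ∀ T ∈ S,
      (B.filter fun b => (Set.Icc b (fun i => b i + s) ∩ T).Nonempty).card ≤ B.card := by
    intro T hT
    rw [← B.ncard_sep_coe_eq_card_filter]
    exact hcnt T hT
  obtain ⟨k, B', hB', hcard, hcnt', 𝒮, h𝒮, h𝒮card, h𝒮cov⟩ :=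
    CoveringRegularity.exists_regular_subset S _ hcov hcnt₁
  refine ⟨k, B', hB', ?_, fun T hT => ?_, 𝒮, h𝒮, ?_, h𝒮cov⟩
  · have hlog := Nat.log_two_add_one_le_four_mul_log B.card
    have hpos : 0 < Real.log (2 + B.card) :=
      Real.log_pos (by linarith [B.card.cast_nonneg (α := ℝ)])
    have hcard' : (B.card : ℝ) ≤ (Nat.log 2 B.card + 1) * B'.card := by exact_mod_cast hcard
    have : (B.card : ℝ) / Real.log (2 + B.card) ≤ 4 * B'.card := by
      rw [div_le_iff₀ hpos]
      nlinarith [B'.card.cast_nonneg (α := ℝ)]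
    rw [mul_assoc, ← div_eq_inv_mul]
    linarith
  · rw [B'.ncard_sep_coe_eq_card_filter]
    exact_mod_cast hcnt' T hT
  · rw [one_mul, le_div_iff₀ (by positivity), mul_comm]
    exact_mod_cast h𝒮card
end

section
/- Let $T_1, T_2, T_3 \subset \mathbb{R}^{n+1}$ be slabs, where $T_i$ is the set of points whose (signed) distance to a hyperplane with unit normal $v_i$ is at most $\delta_i$, intersected with a ball of radius $\sqrt{R}$. If $|v_1 \wedge v_2 \wedge v_3| \geq \kappa > 0$, then $|T_1 \cap T_2 \cap T_3| \leq C_n \kappa^{-1} \delta_1 \delta_2 \delta_3 \, R^{(n-2)/2}$. -/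
/-!
Choose an orthonormal basis of `ℝ^{n+1}` whose last `n - 2` vectors are orthogonal to the three
normals `vᵢ`. In these coordinates `x = (y, t) ∈ ℝ³ × ℝ^{n-2}` the slab conditions read
`|(M y)ᵢ - cᵢ| ≤ δᵢ`, where `M` is the matrix of the first three coordinates of the normals,
and the ball confines `t` to a cube of side `2√R`. The intersection thus lies in a product of
a parallelepiped of volume `|det M|⁻¹ ∏ 2δᵢ` and a cube of volume `(2√R)^{n-2}`, and
`(det M)² = det (M Mᵀ)` is the Gram determinant of the normals, which is at least `κ²`.
-/

open MeasureTheory Module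
open scoped RealInnerProductSpace Matrix

variable {E : Type*} [NormedAddCommGroup E] [InnerProductSpace ℝ E]
  {ι κ : Type*} [Fintype ι] [Fintype κ]

namespace OrthonormalBasis

theorem abs_repr_sub_repr_le_dist (b : OrthonormalBasis ι ℝ E) (x y : E) (i : ι) :
    |b.repr x i - b.repr y i| ≤ dist x y := by
  rw [dist_eq_norm, ← b.repr.norm_map, map_sub]
  exact PiLp.norm_apply_le (b.repr x - b.repr y) i

theorem inner_eq_sum_repr_inl (b : OrthonormalBasis (ι ⊕ κ) ℝ E) {y : E}
    (hy : ∀ k, ⟪y, b (.inr k)⟫ = 0) (x : E) :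
    ⟪x, y⟫ = ∑ i, b.repr x (.inl i) * b.repr y (.inl i) := by
  rw [← b.sum_inner_mul_inner, Fintype.sum_sum_type]
  simp [b.repr_apply_apply, hy, real_inner_comm]

noncomputable def inlCoordMatrix (b : OrthonormalBasis (ι ⊕ κ) ℝ E) (v : ι → E) :
    Matrix ι ι ℝ :=
  Matrix.of fun i k => b.repr (v i) (.inl k)

theorem inner_eq_inlCoordMatrix_mulVec (b : OrthonormalBasis (ι ⊕ κ) ℝ E) {v : ι → E}
    (hv : ∀ i k, ⟪v i, b (.inr k)⟫ = 0) (x : E) (i : ι) :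
    ⟪x, v i⟫ = (b.inlCoordMatrix v *ᵥ fun k => b.repr x (.inl k)) i := by
  simp [b.inner_eq_sum_repr_inl (hv i), inlCoordMatrix, Matrix.mulVec, dotProduct, mul_comm]

theorem gram_eq_inlCoordMatrix_mul_transpose (b : OrthonormalBasis (ι ⊕ κ) ℝ E) {v : ι → E}
    (hv : ∀ i k, ⟪v i, b (.inr k)⟫ = 0) :
    Matrix.of (fun i j => ⟪v i, v j⟫) = b.inlCoordMatrix v * (b.inlCoordMatrix v)ᵀ := by
  ext i j
  simp [b.inner_eq_sum_repr_inl (hv j), inlCoordMatrix, Matrix.mul_apply]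

end OrthonormalBasis

variable [FiniteDimensional ℝ E]

theorem exists_orthonormalBasis_sum_inner_inr_eq_zero (v : ι → E)
    (h : finrank ℝ E = Fintype.card ι + Fintype.card κ) :
    ∃ b : OrthonormalBasis (ι ⊕ κ) ℝ E, ∀ i k, ⟪v i, b (.inr k)⟫ = 0 := by
  set K := Submodule.span ℝ (Set.range v)
  have hcard : Fintype.card κ ≤ finrank ℝ Kᗮ := by
    have : finrank ℝ K ≤ Fintype.card ι := finrank_range_le_card v
    have := K.finrank_add_finrank_orthogonal
    omega
  obtain ⟨emb⟩ :=
    Function.Embedding.nonempty_of_card_le (β := Fin (finrank ℝ Kᗮ)) (by simpa using hcard)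
  set w : κ → E := fun k => (stdOrthonormalBasis ℝ Kᗮ (emb k) : E)
  have hw : Orthonormal ℝ w :=
    ((stdOrthonormalBasis ℝ Kᗮ).orthonormal.comp _ emb.injective).comp_linearIsometry Kᗮ.subtypeₗᵢ
  have hws : Orthonormal ℝ ((Set.range Sum.inr).domRestrict (Sum.elim (0 : ι → E) w)) := by
    convert hw.comp _ (Equiv.Set.rangeInr ι κ).injective
    ext ⟨_, k, rfl⟩; rfl
  obtain ⟨b, hb⟩ := hws.exists_orthonormalBasis_extension_of_card_eq (by simpa using h)
  refine ⟨b, fun i k => ?_⟩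
  rw [hb _ (Set.mem_range_self k)]
  exact Submodule.inner_right_of_mem_orthogonal (Submodule.subset_span (Set.mem_range_self i))
    (stdOrthonormalBasis ℝ Kᗮ (emb k)).2

namespace OrthonormalBasis

variable [MeasurableSpace E] [BorelSpace E]

theorem volume_setOf_repr_inl_mem_and_repr_inr_mem (b : OrthonormalBasis (ι ⊕ κ) ℝ E)
    (A : Set (ι → ℝ)) (B : Set (κ → ℝ)) :
    volume {x | (fun i => b.repr x (.inl i)) ∈ A ∧ (fun k => b.repr x (.inr k)) ∈ B} =
      volume A * volume B := by
  let Φ : E ≃ᵐ (ι → ℝ) × (κ → ℝ) :=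
    (b.measurableEquiv.trans (MeasurableEquiv.toLp 2 _).symm).trans
      (MeasurableEquiv.sumPiEquivProdPi fun _ => ℝ)
  have hΦ : MeasurePreserving Φ :=
    (volume_measurePreserving_sumPiEquivProdPi _).comp
      ((EuclideanSpace.volume_preserving_symm_measurableEquiv_toLp _).comp
        b.measurePreserving_measurableEquiv)
  rw [← Measure.prod_prod, ← Measure.volume_eq_prod, ← hΦ.measure_preimage_equiv]
  rfl

theorem volume_slabs_inter_box [DecidableEq ι] (b : OrthonormalBasis (ι ⊕ κ) ℝ E) {v : ι → E}
    (hv : ∀ i k, ⟪v i, b (.inr k)⟫ = 0) (hdet : (b.inlCoordMatrix v).det ≠ 0)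
    (c δ : ι → ℝ) (a r : κ → ℝ) :
    volume {x | (∀ i, |⟪x, v i⟫ - c i| ≤ δ i) ∧ ∀ k, |b.repr x (.inr k) - a k| ≤ r k} =
      ENNReal.ofReal |(b.inlCoordMatrix v).det|⁻¹ * (∏ i, ENNReal.ofReal (2 * δ i)) *
        ∏ k, ENNReal.ofReal (2 * r k) := by
  have hset : {x | (∀ i, |⟪x, v i⟫ - c i| ≤ δ i) ∧ ∀ k, |b.repr x (.inr k) - a k| ≤ r k} =
      {x | (fun i => b.repr x (.inl i)) ∈ Matrix.toLin' (b.inlCoordMatrix v) ⁻¹'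
          Set.univ.pi (fun i => Metric.closedBall (c i) (δ i)) ∧
        (fun k => b.repr x (.inr k)) ∈ Set.univ.pi (fun k => Metric.closedBall (a k) (r k))} := by
    ext x
    simp [b.inner_eq_inlCoordMatrix_mulVec hv, Real.dist_eq]
  rw [hset, volume_setOf_repr_inl_mem_and_repr_inr_mem,
    Measure.addHaar_preimage_linearMap _ (by rwa [LinearMap.det_toLin']), LinearMap.det_toLin',
    volume_pi_pi, volume_pi_pi, abs_inv]
  simp only [Real.volume_closedBall]

end OrthonormalBasis

/-- Three transverse slabs in `ℝ^{n+1}`: if the Gram determinant of the three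
unit normals is at least `κ²` (i.e. `|v₁ ∧ v₂ ∧ v₃| ≥ κ`), then the
intersection of the three slabs of thicknesses `δᵢ`, intersected with a ball of
radius `√R`, has measure at most `C_n κ⁻¹ δ₁ δ₂ δ₃ R^{(n-2)/2}`. -/
theorem transverse_slabs_intersection (n : ℕ) (hn : 2 ≤ n) :
    ∃ C : ℝ, 0 < C ∧
    ∀ (v : Fin 3 → EuclideanSpace ℝ (Fin (n + 1))) (δ c : Fin 3 → ℝ)
      (κ R : ℝ) (z : EuclideanSpace ℝ (Fin (n + 1))),
      (∀ i, ‖v i‖ = 1) → (∀ i, 0 < δ i) → 0 < κ → 1 ≤ R →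
      κ ^ 2 ≤ (Matrix.of fun i j : Fin 3 => (inner ℝ (v i) (v j) : ℝ)).det →
      volume (⋂ i, ({x : EuclideanSpace ℝ (Fin (n + 1)) |
          |(inner ℝ x (v i) : ℝ) - c i| ≤ δ i} ∩ Metric.ball z (Real.sqrt R)))
        ≤ ENNReal.ofReal (C * κ⁻¹ * δ 0 * δ 1 * δ 2 * R ^ (((n : ℝ) - 2) / 2)) := by
  refine ⟨2 ^ (n + 1), by positivity, fun v δ c κ R z _ hδ hκ hR hgram => ?_⟩
  obtain ⟨b, hb⟩ := exists_orthonormalBasis_sum_inner_inr_eq_zero (κ := Fin (n - 2)) v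
    (by simp only [finrank_euclideanSpace, Fintype.card_fin]; omega)
  obtain ⟨hδ₀, hδ₁, hδ₂⟩ : 0 < δ 0 ∧ 0 < δ 1 ∧ 0 < δ 2 := ⟨hδ 0, hδ 1, hδ 2⟩
  have hκM : κ ≤ |(b.inlCoordMatrix v).det| := by
    rw [b.gram_eq_inlCoordMatrix_mul_transpose hb, Matrix.det_mul, Matrix.det_transpose,
      ← sq] at hgram
    simpa [abs_of_pos hκ] using sq_le_sq.mp hgram
  have hRpow : √R ^ (n - 2) = R ^ (((n : ℝ) - 2) / 2) := by
    rw [Real.rpow_div_two_eq_sqrt _ (by linarith), ← Real.rpow_natCast, Nat.cast_sub hn,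
      Nat.cast_ofNat]
  calc _ ≤ volume {x | (∀ i, |⟪x, v i⟫ - c i| ≤ δ i) ∧
          ∀ k, |b.repr x (.inr k) - b.repr z (.inr k)| ≤ √R} := by
        refine measure_mono fun x hx => ?_
        simp only [Set.mem_iInter, Set.mem_inter_iff, Set.mem_ofPred_eq, Metric.mem_ball] at hx
        exact ⟨fun i => (hx i).1, fun k => (b.abs_repr_sub_repr_le_dist x z _).trans (hx 0).2.le⟩
    _ = _ := b.volume_slabs_inter_box hb (abs_pos.mp (hκ.trans_le hκM)) c δ _ fun _ => √R
    _ = ENNReal.ofReal (2 ^ (n + 1) * |(b.inlCoordMatrix v).det|⁻¹ * δ 0 * δ 1 * δ 2 *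
          R ^ (((n : ℝ) - 2) / 2)) := by
      rw [Fin.prod_univ_three, Finset.prod_const, Finset.card_univ, Fintype.card_fin,
        ← ENNReal.ofReal_pow (by positivity), ← ENNReal.ofReal_mul (by positivity),
        ← ENNReal.ofReal_mul (by positivity), ← ENNReal.ofReal_mul (by positivity),
        ← ENNReal.ofReal_mul (by positivity), ← hRpow,
        mul_pow, show (2 : ℝ) ^ (n + 1) = 2 ^ 3 * 2 ^ (n - 2) by rw [← pow_add]; congr 1; omega]
      ring_nf
    _ ≤ _ := by gcongr
end
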